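/- arXiv:0801.0586 — 2 statements merged into one kernel-verified Lean document; each statement's English description precedes it below -/
import Mathlib

section
/- Let n ≥ 1, let d be an even positive integer, and let T be the Chebyshev polynomial of the first kind of degree d. Let q_1 < … < q_m be the m smallest prime numbers greater than n, and for 1 ≤ i ≤ m set g_i^+(x) = n + 1/q_i + ∑_{k=1}^{n} T(x_k)/(q_i − n − 1 + k). Then for every subset {i_1,…,i_s} ⊆ {1,…,m} with s ≥ n+1: (i) the polynomials g_{i_1}^+,…,g_{i_s}^+ have no common zero in ℂⁿ; and (ii) the homogeneous polynomials ∑_{k=1}^{n} x_k^d/(q_{i_j} − n − 1 + k), j = 1,…,s, have no common zero in ℂⁿ ∖ {0}. -/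
/-!
Both parts are statements about partial fractions with the simple poles `a_k = n + 1 - k`, since
`q - n - 1 + k = q - a_k`; put `y_k = T(x_k)` in (i) and `y_k = x_k ^ d` in (ii).

(ii) `∑ y_k / (t - a_k) = N(t) / A(t)` with `A = ∏ (X - a_k)` and `deg N < n`. Vanishing at `n`
distinct points `t = q_i` forces `N = 0`, and `N(a_k)` is a nonzero multiple of `y_k`.

(i) If `n + 1/t + ∑ y_k / (t - a_k)` vanished at `n + 1` points `t ∈ T`, then the polynomial
`t A(t) (n + 1/t + ∑ y_k / (t - a_k))`, of degree `n + 1` with leading coefficient `n`, would equal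
`n ∏_{t ∈ T} (X - t)`. Comparing constant terms gives `∏ a_k + n ∏_{t ∈ T} t = 0`, impossible as
all these numbers are positive.
-/

open Polynomial Finset

namespace Lagrange

section CommRing

variable {R ι : Type*} [CommRing R] {s : Finset ι} {v : ι → R}

theorem eval_nodal_zero : eval 0 (nodal s v) = (-1) ^ #s * ∏ i ∈ s, v i := by
  rw [eval_nodal, ← prod_neg]; simp

theorem degree_smul_X_mul_nodal_sub_nodal_add_lt [Nontrivial R] {T : Finset R}
    (hT : #T = #s + 1) (c : R) {L : R[X]} (hL : L.degree < #s) :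
    (c • (X * nodal s v - nodal T id) + nodal s v + X * L).degree < (#T : WithBot ℕ) := by
  have hXA : (X * nodal s v).degree = (#s : WithBot ℕ) + 1 := by
    rw [mul_comm, degree_mul_X, degree_nodal]
  have hXAB : (X * nodal s v - nodal T id).degree < (#s : WithBot ℕ) + 1 := by
    rw [← hXA]
    refine degree_sub_lt_left (by rw [hXA, degree_nodal, hT]; push_cast; rfl) ?_ ?_
    · exact (monic_X.mul nodal_monic).ne_zero
    · rw [(monic_X.mul nodal_monic).leadingCoeff, nodal_monic.leadingCoeff]
  have hA : (nodal s v).degree < (#s : WithBot ℕ) + 1 := by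
    rw [degree_nodal]; exact WithBot.coe_lt_coe.mpr (Nat.lt_succ_self _)
  have hXL : (X * L).degree < (#s : WithBot ℕ) + 1 := by
    rw [mul_comm, degree_mul_X]
    exact WithBot.add_lt_add_right WithBot.one_ne_bot hL
  rw [hT]; push_cast
  exact (degree_add_le _ _).trans_lt <| max_lt ((degree_add_le _ _).trans_lt
    (max_lt ((degree_smul_le _ _).trans_lt hXAB) hA)) hXL

end CommRing

variable {F ι : Type*} [Field F] [DecidableEq ι] {s : Finset ι} {v : ι → F}

theorem eval_interpolate_div_nodalWeight (hvs : Set.InjOn v s) (y : ι → F) {x : F}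
    (hx : ∀ i ∈ s, x ≠ v i) :
    eval x (interpolate s v fun i => y i / nodalWeight s v i) =
      eval x (nodal s v) * ∑ i ∈ s, (x - v i)⁻¹ * y i := by
  rw [eval_interpolate_not_at_node _ hx]
  congr 1
  refine sum_congr rfl fun i hi => ?_
  have := nodalWeight_ne_zero hvs hi
  field_simp

theorem eq_zero_of_forall_sum_inv_sub_mul_eq_zero (hvs : Set.InjOn v s) {y : ι → F}
    {T : Finset F} (hT : #s ≤ #T) (hTv : ∀ t ∈ T, ∀ i ∈ s, t ≠ v i)
    (h : ∀ t ∈ T, ∑ i ∈ s, (t - v i)⁻¹ * y i = 0) {i : ι} (hi : i ∈ s) : y i = 0 := by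
  have hL : interpolate s v (fun i => y i / nodalWeight s v i) = 0 := by
    refine eq_zero_of_degree_lt_of_eval_finset_eq_zero T
      ((degree_interpolate_lt _ hvs).trans_le (by exact_mod_cast hT)) fun t ht => ?_
    rw [eval_interpolate_div_nodalWeight hvs y (hTv t ht), h t ht, mul_zero]
  have := eval_interpolate_at_node (fun i => y i / nodalWeight s v i) hvs hi
  rw [hL, eval_zero, eq_comm, div_eq_zero_iff] at this
  exact this.resolve_right (nodalWeight_ne_zero hvs hi)

theorem prod_add_mul_prod_eq_zero_of_forall_add_inv_add_sum_eq_zero (hvs : Set.InjOn v s)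
    {y : ι → F} {c : F} {T : Finset F} (hT : #T = #s + 1) (hT0 : (0 : F) ∉ T)
    (hTv : ∀ t ∈ T, ∀ i ∈ s, t ≠ v i)
    (h : ∀ t ∈ T, c + t⁻¹ + ∑ i ∈ s, (t - v i)⁻¹ * y i = 0) :
    ∏ i ∈ s, v i + c * ∏ t ∈ T, t = 0 := by
  set L := interpolate s v fun i => y i / nodalWeight s v i with hL
  have hP : c • (X * nodal s v - nodal T id) + nodal s v + X * L = 0 := by
    refine eq_zero_of_degree_lt_of_eval_finset_eq_zero T
      (degree_smul_X_mul_nodal_sub_nodal_add_lt hT c (degree_interpolate_lt _ hvs))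
      fun t ht => ?_
    have ht0 : t ≠ 0 := fun h => hT0 (h ▸ ht)
    have hB : eval t (nodal T id) = 0 := eval_nodal_at_node (v := id) ht
    calc _ = t * eval t (nodal s v) * (c + t⁻¹ + ∑ i ∈ s, (t - v i)⁻¹ * y i) := by
          simp only [hL, eval_add, eval_mul, eval_smul, smul_eq_mul, eval_sub, eval_X, hB,
            eval_interpolate_div_nodalWeight hvs y (hTv t ht)]
          field_simp
          ring
      _ = 0 := by rw [h t ht, mul_zero]
  have h0 := congrArg (eval 0) hP
  simp only [eval_add, eval_mul, eval_smul, smul_eq_mul, eval_sub, eval_X, eval_nodal_zero, hT,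
    id_eq, eval_zero, zero_mul, add_zero] at h0
  refine (mul_eq_zero.mp ?_).resolve_left (pow_ne_zero #s (neg_ne_zero.mpr one_ne_zero))
  linear_combination h0

end Lagrange

open MvPolynomial

/-- Evaluation of the Chebyshev polynomial of the first kind of degree `d` at a
complex number. -/
noncomputable def chebEval (d : ℕ) (z : ℂ) : ℂ :=
  Polynomial.eval z (Polynomial.Chebyshev.T ℂ d)

/-- `g_i^+(x) = n + 1/q_i + ∑_{k=1}^n T(x_k)/(q_i - n - 1 + k)`. -/
noncomputable def gplus (n : ℕ) (d : ℕ) (q : ℕ) (x : Fin n → ℂ) : ℂ :=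
  (n : ℂ) + ((q : ℂ))⁻¹ +
    ∑ k : Fin n, (((q - n - 1 + ((k : ℕ) + 1) : ℕ) : ℂ))⁻¹ * chebEval d (x k)

-- The paper's `n + 1 - k`, with `k : Fin n` shifted to start at `0`.
def pole (n : ℕ) (k : Fin n) : ℂ := ((n - k : ℕ) : ℂ)

theorem pole_injective (n : ℕ) : Function.Injective (pole n) := fun k l h => by
  have := Nat.cast_injective h
  omega

theorem natCast_sub_sub_one_add_succ {n q : ℕ} (hq : n < q) (k : Fin n) :
    (((q - n - 1 + ((k : ℕ) + 1) : ℕ) : ℂ)) = q - pole n k := by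
  rw [pole, ← Nat.cast_sub (by omega)]
  congr 1
  omega

theorem natCast_ne_pole {n q : ℕ} (hq : n < q) (k : Fin n) : (q : ℂ) ≠ pole n k := by
  rw [pole, Ne, Nat.cast_inj]
  omega

theorem exists_gplus_ne_zero {n : ℕ} (d : ℕ) {Q : Finset ℕ} (hQ : #Q = n + 1)
    (hQn : ∀ p ∈ Q, n < p) (x : Fin n → ℂ) : ∃ p ∈ Q, gplus n d p x ≠ 0 := by
  by_contra! hx
  have key := Lagrange.prod_add_mul_prod_eq_zero_of_forall_add_inv_add_sum_eq_zero
    (pole_injective n).injOn (y := fun k => chebEval d (x k)) (c := n)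
    (T := Q.image Nat.cast)
    (by rw [card_image_of_injective _ Nat.cast_injective, hQ, card_univ, Fintype.card_fin])
    (by
      simp only [mem_image, not_exists, not_and]
      exact fun p hp h => (Nat.zero_lt_of_lt (hQn p hp)).ne' (Nat.cast_eq_zero.mp h))
    (forall_mem_image.mpr fun p hp k _ => natCast_ne_pole (hQn p hp) k)
    (forall_mem_image.mpr fun p hp => by
      simpa only [gplus, natCast_sub_sub_one_add_succ (hQn p hp)] using hx p hp)
  rw [prod_image Nat.cast_injective.injOn] at key
  have hpos : 0 < ∏ k : Fin n, (n - (k : ℕ)) + n * ∏ p ∈ Q, p :=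
    Nat.add_pos_left (prod_pos fun k _ => Nat.sub_pos_of_lt k.isLt) _
  refine hpos.ne' (Nat.cast_eq_zero (R := ℂ) |>.mp ?_)
  rwa [Nat.cast_add, Nat.cast_mul, Nat.cast_prod, Nat.cast_prod]

theorem eq_zero_of_forall_sum_inv_mul_pow_eq_zero {n d : ℕ} (hd : d ≠ 0) {Q : Finset ℕ}
    (hQ : n ≤ #Q) (hQn : ∀ p ∈ Q, n < p) {x : Fin n → ℂ}
    (hx : ∀ p ∈ Q, ∑ k : Fin n, (((p - n - 1 + ((k : ℕ) + 1) : ℕ) : ℂ))⁻¹ * x k ^ d = 0) :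
    x = 0 := by
  refine funext fun k => (pow_eq_zero_iff hd).mp ?_
  refine Lagrange.eq_zero_of_forall_sum_inv_sub_mul_eq_zero (pole_injective n).injOn
    (y := fun k => x k ^ d) (T := Q.image Nat.cast) ?_
    (forall_mem_image.mpr fun p hp k _ => natCast_ne_pole (hQn p hp) k)
    (forall_mem_image.mpr fun p hp => ?_) (mem_univ k)
  · rwa [card_image_of_injective _ Nat.cast_injective, card_univ, Fintype.card_fin]
  · simpa only [natCast_sub_sub_one_add_succ (hQn p hp)] using hx p hp

theorem statement9_general (n m : ℕ)
    (d : ℕ) (hd0 : 0 < d)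
    (q : Fin m → ℕ) (hqmono : StrictMono q)
    (hqn : ∀ i, n < q i) :
    ∀ S : Finset (Fin m), n + 1 ≤ S.card →
      (¬ ∃ x : Fin n → ℂ, ∀ i ∈ S, gplus n d (q i) x = 0) ∧
      (∀ x : Fin n → ℂ, x ≠ 0 →
        ¬ ∀ i ∈ S, ∑ k : Fin n,
            (((q i - n - 1 + ((k : ℕ) + 1) : ℕ) : ℂ))⁻¹ * (x k) ^ d = 0) := by
  intro S hS
  have hqn' : ∀ p ∈ S.image q, n < p := forall_mem_image.mpr fun i _ => hqn i
  refine ⟨fun ⟨x, hx⟩ => ?_, fun x hx h => hx ?_⟩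
  · obtain ⟨S', hS'S, hS'⟩ := exists_subset_card_eq hS
    obtain ⟨p, hp, hne⟩ := exists_gplus_ne_zero d (Q := S'.image q)
      (by rw [card_image_of_injective _ hqmono.injective, hS'])
      (fun p hp => hqn' p (image_subset_image hS'S hp)) x
    obtain ⟨i, hi, rfl⟩ := mem_image.mp hp
    exact hne (hx i (hS'S hi))
  · refine eq_zero_of_forall_sum_inv_mul_pow_eq_zero hd0.ne' (Q := S.image q) ?_ hqn'
      (forall_mem_image.mpr h)
    rw [card_image_of_injective _ hqmono.injective]
    omega

theorem statement9 (n m : ℕ) (hn : 0 < n)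
    (d : ℕ) (hd0 : 0 < d) (hdeven : Even d)
    (q : Fin m → ℕ) (hqmono : StrictMono q)
    (hqprime : ∀ i, (q i).Prime) (hqn : ∀ i, n < q i)
    -- `q` lists the `m` smallest primes greater than `n`
    (hqsmall : ∀ i : Fin m, ∀ p : ℕ, p.Prime → n < p → p < q i → ∃ j : Fin m, q j = p) :
    ∀ S : Finset (Fin m), n + 1 ≤ S.card →
      (¬ ∃ x : Fin n → ℂ, ∀ i ∈ S, gplus n d (q i) x = 0) ∧
      (∀ x : Fin n → ℂ, x ≠ 0 →
        ¬ ∀ i ∈ S, ∑ k : Fin n,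
            (((q i - n - 1 + ((k : ℕ) + 1) : ℕ) : ℂ))⁻¹ * (x k) ^ d = 0) :=
  statement9_general n m d hd0 q hqmono hqn
end

section
/- Let f ∈ ℂ[x_1,x_2] be a nonconstant polynomial with no nonconstant factor in ℂ[x_1], and let g_1, g_2 ∈ ℂ[x_1,x_2] with f and g_1 coprime. Write f' = ∂f/∂x_2, let h be a greatest common divisor of f and f' in ℂ[x_1,x_2], and set h_1 = f/h, h_2 = f'/h. In ℂ[t,x_1,x_2], let F_1 = (1−t)f + t g_1, F_2 = (1−t)f' + t g_2, and let I be the ideal generated by F_1 and F_2. Then the saturation of I with respect to t equals the colon ideal (I : t), and both equal I + (h_2 g_1 − h_1 g_2); that is, for every p ∈ ℂ[t,x_1,x_2], the following are equivalent: (a) t·p ∈ I; (b) t^k·p ∈ I for some k ≥ 1; (c) p ∈ I + (h_2 g_1 − h_1 g_2). -/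
open MvPolynomial

/-- Inclusion `ℂ[x₁,x₂] → ℂ[t,x₁,x₂]`, where `t` is the variable of index `0`
and `x₁, x₂` become the variables of index `1, 2`. -/
noncomputable def incl : MvPolynomial (Fin 2) ℂ →ₐ[ℂ] MvPolynomial (Fin 3) ℂ :=
  rename Fin.succ

/-!
Write `Δ = h₂ g₁ - h₁ g₂`. The identities `h₂ F₁ - h₁ F₂ = t Δ` and
`g₂ F₁ - g₁ F₂ + (1 - t) h Δ = 0` give `t J ⊆ I ⊆ J`, so both claims reduce to `t` being a
nonzerodivisor modulo `J = (F₁, F₂, Δ)`. As `ℂ[t,x₁,x₂]/(t) = ℂ[x₁,x₂]`, this holds once every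
syzygy of `(f, f', Δ)` lifts to a syzygy of `(F₁, F₂, Δ)`. The two identities lift
`(g₂, -g₁, h)` and `(h₂, -h₁, 0)`, and these generate all syzygies of `(f, f', Δ)` because
`h₁, h₂` are coprime and so are `f, Δ`: a prime `π` dividing `f` exactly `e` times does not
divide `∂π` (as `f` has no factor in `ℂ[x₁]`), so it divides `f'` exactly `e - 1` times, whence
`π ∣ h₁` and `π ∤ h₂`; as `π ∤ g₁`, also `π ∤ Δ`.
-/

theorem mul_mem_iff_and_exists_pow_mul_mem_iff {S : Type*} [CommRing S] {I J : Ideal S} {t : S}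
    (hIJ : I ≤ J) (htJ : ∀ p ∈ J, t * p ∈ I) (hreg : ∀ q, t * q ∈ J → q ∈ J) (p : S) :
    (t * p ∈ I ↔ p ∈ J) ∧ ((∃ k, 1 ≤ k ∧ t ^ k * p ∈ I) ↔ p ∈ J) := by
  have hpow : ∀ k q, t ^ k * q ∈ J → q ∈ J := by
    intro k
    induction k with
    | zero => simp
    | succ k ih => exact fun q hq ↦ hreg q (ih _ (by rwa [← mul_assoc, ← pow_succ]))
  exact ⟨⟨fun hp ↦ hreg p (hIJ hp), htJ p⟩,
    ⟨fun ⟨k, _, hk⟩ ↦ hpow k p (hIJ hk), fun hp ↦ ⟨1, le_rfl, by simpa using htJ p hp⟩⟩⟩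

theorem mul_mem_of_mem_sup_span_singleton {S : Type*} [CommRing S] {I : Ideal S} {t D p : S}
    (htD : t * D ∈ I) (hp : p ∈ I ⊔ Ideal.span {D}) : t * p ∈ I := by
  obtain ⟨i, hi, d, hd, rfl⟩ := Submodule.mem_sup.mp hp
  obtain ⟨c, rfl⟩ := Ideal.mem_span_singleton'.mp hd
  rw [mul_add, mul_left_comm]
  exact I.add_mem (I.mul_mem_left t hi) (I.mul_mem_left c htD)

theorem mem_of_mul_mem_span_triple {R S : Type*} [CommRing R] [CommRing S] (φ : S →+* R)
    {t : S} (ht : IsLeftRegular t) (hker : ∀ P, t ∣ P ↔ φ P = 0) {F₁ F₂ F₃ : S}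
    (hlift : ∀ a₁ a₂ a₃ : R, a₁ * φ F₁ + a₂ * φ F₂ + a₃ * φ F₃ = 0 →
      ∃ b₁ b₂ b₃ : S, b₁ * F₁ + b₂ * F₂ + b₃ * F₃ = 0 ∧ φ b₁ = a₁ ∧ φ b₂ = a₂ ∧ φ b₃ = a₃)
    {q : S} (hq : t * q ∈ Ideal.span {F₁, F₂, F₃}) : q ∈ Ideal.span {F₁, F₂, F₃} := by
  obtain ⟨a₁, a₂, a₃, ha⟩ := Submodule.mem_span_triple.mp hq
  simp only [smul_eq_mul] at ha
  obtain ⟨b₁, b₂, b₃, hb, hb₁, hb₂, hb₃⟩ := hlift (φ a₁) (φ a₂) (φ a₃) (by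
    simpa only [map_add, map_mul, (hker t).mp dvd_rfl, zero_mul] using congrArg φ ha)
  obtain ⟨c₁, hc₁⟩ := (hker (a₁ - b₁)).mpr (by rw [map_sub, hb₁, sub_self])
  obtain ⟨c₂, hc₂⟩ := (hker (a₂ - b₂)).mpr (by rw [map_sub, hb₂, sub_self])
  obtain ⟨c₃, hc₃⟩ := (hker (a₃ - b₃)).mpr (by rw [map_sub, hb₃, sub_self])
  have : t * q = t * (c₁ * F₁ + c₂ * F₂ + c₃ * F₃) := by
    linear_combination -ha + hb + F₁ * hc₁ + F₂ * hc₂ + F₃ * hc₃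
  exact Submodule.mem_span_triple.mpr ⟨c₁, c₂, c₃, (ht this).symm⟩

theorem isRelPrime_cofactors_of_gcd {R : Type*} [CommMonoidWithZero R] [IsCancelMulZero R]
    {f f' h h₁ h₂ : R} (hh : h ≠ 0) (hgcd : ∀ w, w ∣ f → w ∣ f' → w ∣ h)
    (hco₁ : f = h * h₁) (hco₂ : f' = h * h₂) : IsRelPrime h₁ h₂ := by
  rintro w ⟨k₁, rfl⟩ ⟨k₂, rfl⟩
  obtain ⟨v, hv⟩ := hgcd (h * w) ⟨k₁, by rw [hco₁, mul_assoc]⟩ ⟨k₂, by rw [hco₂, mul_assoc]⟩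
  exact IsUnit.of_mul_eq_one v (mul_left_cancel₀ hh (by rw [← mul_assoc, ← hv, mul_one]))

theorem Derivation.exists_eq_pow_pred_mul_not_dvd {A R : Type*} [CommSemiring A] [CommRing R]
    [Algebra A R] (D : Derivation A R R) {π u : R} (hπ : Prime π) (hπD : ¬π ∣ D π)
    (hu : ¬π ∣ u) {e : ℕ} (he : IsUnit (e : R)) :
    ∃ v, D (π ^ e * u) = π ^ (e - 1) * v ∧ ¬π ∣ v := by
  have he₀ : e ≠ 0 := by
    rintro rfl
    exact hπ.not_isUnit (isUnit_of_dvd_unit (dvd_zero π) (by simpa using he))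
  refine ⟨e * D π * u + π * D u, ?_, fun hv ↦ ?_⟩
  · rw [D.leibniz, D.leibniz_pow, smul_eq_mul, smul_eq_mul, nsmul_eq_mul, smul_eq_mul,
      ← Nat.sub_add_cancel (Nat.one_le_iff_ne_zero.mpr he₀), pow_succ, Nat.add_sub_cancel]
    ring
  · have : π ∣ e * D π * u := by simpa using dvd_sub hv (dvd_mul_right π (D u))
    rcases hπ.dvd_or_dvd this with hπeD | hπu
    · exact (hπ.dvd_or_dvd hπeD).elim (fun hπe ↦ hπ.not_isUnit (isUnit_of_dvd_unit hπe he)) hπD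
    · exact hu hπu

theorem prime_dvd_and_not_dvd_cofactors_of_gcd {R : Type*} [CommMonoidWithZero R]
    [IsCancelMulZero R] {π f f' h h₁ h₂ u v : R} {e : ℕ} (hπ : Prime π) (he : e ≠ 0)
    (hf : f = π ^ e * u) (hf' : f' = π ^ (e - 1) * v) (hv : ¬π ∣ v)
    (hgcd : ∀ w, w ∣ f → w ∣ f' → w ∣ h) (hco₁ : f = h * h₁) (hco₂ : f' = h * h₂) :
    π ∣ h₁ ∧ ¬π ∣ h₂ := by
  have hpow : π ^ e = π ^ (e - 1) * π := by rw [← pow_succ, Nat.sub_add_cancel (by omega)]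
  obtain ⟨w, rfl⟩ : π ^ (e - 1) ∣ h :=
    hgcd _ ⟨π * u, by rw [hf, hpow, mul_assoc]⟩ ⟨v, hf'⟩
  have hπe : π ^ (e - 1) ≠ 0 := pow_ne_zero _ hπ.ne_zero
  have hwh₂ : w * h₂ = v := mul_left_cancel₀ hπe (by rw [← mul_assoc, ← hco₂, hf'])
  have hwh₁ : w * h₁ = π * u :=
    mul_left_cancel₀ hπe (by rw [← mul_assoc, ← hco₁, hf, hpow, mul_assoc])
  have hπw : ¬π ∣ w := fun hw ↦ hv (hwh₂ ▸ hw.mul_right h₂)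
  exact ⟨(hπ.dvd_or_dvd (hwh₁ ▸ dvd_mul_right π u)).resolve_left hπw,
    fun hh₂ ↦ hv (hwh₂ ▸ hh₂.mul_left w)⟩

theorem exists_eq_of_syzygy_of_isRelPrime {R : Type*} [CommRing R] [IsDomain R]
    [DecompositionMonoid R] {g₁ g₂ h h₁ h₂ a b c : R} (hh : h ≠ 0) (hh₂ : h₂ ≠ 0)
    (hΔ : IsRelPrime h (h₂ * g₁ - h₁ * g₂)) (h₁₂ : IsRelPrime h₁ h₂)
    (habc : a * (h * h₁) + b * (h * h₂) + c * (h₂ * g₁ - h₁ * g₂) = 0) :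
    ∃ s r, a = r * g₂ + s * h₂ ∧ b = -(r * g₁ + s * h₁) ∧ c = r * h := by
  obtain ⟨r, rfl⟩ : h ∣ c :=
    hΔ.dvd_of_dvd_mul_right ⟨-(a * h₁ + b * h₂), by linear_combination habc⟩
  have hab : (a - r * g₂) * h₁ + (b + r * g₁) * h₂ = 0 :=
    mul_left_cancel₀ hh (by linear_combination habc)
  obtain ⟨s, hs⟩ : h₂ ∣ a - r * g₂ :=
    h₁₂.symm.dvd_of_dvd_mul_right ⟨-(b + r * g₁), by linear_combination hab⟩
  refine ⟨s, r, by linear_combination hs, ?_, mul_comm h r⟩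
  exact mul_left_cancel₀ hh₂ (by linear_combination hab - h₁ * hs)

theorem MvPolynomial.exists_eq_aeval_X_zero_of_pderiv_one_eq_zero {R : Type*} [CommRing R]
    [IsDomain R] [CharZero R] {p : MvPolynomial (Fin 2) R} (hp : pderiv 1 p = 0) :
    ∃ w : Polynomial R, p = Polynomial.aeval (X 0) w := by
  obtain ⟨q, rfl⟩ := (Polynomial.Bivariate.equivMvPolynomial R).surjective p
  rw [Polynomial.Bivariate.pderiv_one_equivMvPolynomial,
    map_eq_zero_iff _ (AlgEquiv.injective _)] at hp
  refine ⟨q.coeff 0, ?_⟩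
  conv_lhs => rw [Polynomial.eq_C_of_derivative_eq_zero hp]
  simp [Polynomial.Bivariate.equivMvPolynomial, Polynomial.eval_map, Polynomial.aeval_def,
    algebraMap_eq]

theorem MvPolynomial.dvd_pderiv_one_iff {R : Type*} [CommSemiring R] [NoZeroDivisors R]
    {p : MvPolynomial (Fin 2) R} : p ∣ pderiv 1 p ↔ pderiv 1 p = 0 := by
  obtain ⟨q, rfl⟩ := (Polynomial.Bivariate.equivMvPolynomial R).surjective p
  rw [Polynomial.Bivariate.pderiv_one_equivMvPolynomial, map_dvd_iff,
    map_eq_zero_iff _ (AlgEquiv.injective _), Polynomial.dvd_derivative_iff]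

theorem MvPolynomial.pderiv_one_ne_zero_of_dvd {R : Type*} [CommRing R] [IsDomain R]
    [CharZero R] {f p : MvPolynomial (Fin 2) R}
    (hfx1 : ∀ w : Polynomial R, Polynomial.aeval (X (0 : Fin 2)) w ∣ f → w.natDegree = 0)
    (hpf : p ∣ f) (hp : ∀ c : R, p ≠ C c) : pderiv 1 p ≠ 0 := by
  intro h0
  obtain ⟨w, rfl⟩ := exists_eq_aeval_X_zero_of_pderiv_one_eq_zero h0
  apply hp (w.coeff 0)
  rw [Polynomial.eq_C_of_natDegree_eq_zero (hfx1 w hpf), Polynomial.aeval_C, algebraMap_eq,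
    Polynomial.coeff_C_zero]

theorem isRelPrime_mul_sub_mul_of_gcd_pderiv {K : Type*} [Field K] [CharZero K]
    {f g₁ g₂ h h₁ h₂ : MvPolynomial (Fin 2) K} (hf₀ : f ≠ 0)
    (hfx1 : ∀ w : Polynomial K, Polynomial.aeval (X (0 : Fin 2)) w ∣ f → w.natDegree = 0)
    (hcop : ∀ u, u ∣ f → u ∣ g₁ → IsUnit u)
    (hgcd : ∀ u, u ∣ f → u ∣ pderiv 1 f → u ∣ h)
    (hco₁ : f = h * h₁) (hco₂ : pderiv 1 f = h * h₂) :
    IsRelPrime f (h₂ * g₁ - h₁ * g₂) := by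
  refine (UniqueFactorizationMonoid.isRelPrime_iff_no_prime_factors hf₀).mpr
    fun π hπf hπΔ hπ ↦ ?_
  have hπC : ∀ c : K, π ≠ C c := by
    rintro c rfl
    have hc : c ≠ 0 := by rintro rfl; exact hπ.ne_zero (map_zero C)
    exact hπ.not_isUnit ((IsUnit.mk0 c hc).map C)
  have hπD : ¬π ∣ pderiv 1 π := by
    rw [dvd_pderiv_one_iff]
    exact pderiv_one_ne_zero_of_dvd hfx1 hπf hπC
  obtain ⟨e, u, hu, rfl⟩ := WfDvdMonoid.max_power_factor' hf₀ hπ.not_isUnit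
  have he : e ≠ 0 := by
    rintro rfl
    exact hu (by simpa using hπf)
  have he_unit : IsUnit (e : MvPolynomial (Fin 2) K) := by
    rw [← map_natCast C]
    exact (IsUnit.mk0 (e : K) (by exact_mod_cast he)).map C
  obtain ⟨v, hv, hπv⟩ := (pderiv 1).exists_eq_pow_pred_mul_not_dvd hπ hπD hu he_unit
  obtain ⟨hπh₁, hπh₂⟩ := prime_dvd_and_not_dvd_cofactors_of_gcd hπ he rfl hv hπv hgcd hco₁ hco₂
  have hπg₁ : ¬π ∣ g₁ := fun hπg₁ ↦ hπ.not_isUnit (hcop π hπf hπg₁)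
  have : π ∣ h₂ * g₁ := by simpa using dvd_add hπΔ (hπh₁.mul_right g₂)
  exact (hπ.dvd_or_dvd this).elim hπh₂ hπg₁

theorem exists_eq_of_syzygy_of_gcd_pderiv {K : Type*} [Field K] [CharZero K]
    {f g₁ g₂ h h₁ h₂ a b c : MvPolynomial (Fin 2) K} (hfnc : ∀ c : K, f ≠ C c)
    (hfx1 : ∀ w : Polynomial K, Polynomial.aeval (X (0 : Fin 2)) w ∣ f → w.natDegree = 0)
    (hcop : ∀ u, u ∣ f → u ∣ g₁ → IsUnit u)
    (hgcd : ∀ u, u ∣ f → u ∣ pderiv 1 f → u ∣ h)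
    (hco₁ : f = h * h₁) (hco₂ : pderiv 1 f = h * h₂)
    (habc : a * f + b * pderiv 1 f + c * (h₂ * g₁ - h₁ * g₂) = 0) :
    ∃ s r, a = r * g₂ + s * h₂ ∧ b = -(r * g₁ + s * h₁) ∧ c = r * h := by
  have hf₀ : f ≠ 0 := fun hf ↦ hfnc 0 (by rw [hf, map_zero])
  have hh₀ : h ≠ 0 := by
    rintro rfl
    exact hf₀ (by rw [hco₁, zero_mul])
  have hh₂ : h₂ ≠ 0 := by
    rintro rfl
    exact pderiv_one_ne_zero_of_dvd hfx1 dvd_rfl hfnc (by rw [hco₂, mul_zero])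
  refine exists_eq_of_syzygy_of_isRelPrime hh₀ hh₂ ?_
    (isRelPrime_cofactors_of_gcd hh₀ hgcd hco₁ hco₂) (by rw [← hco₁, ← hco₂]; exact habc)
  exact (isRelPrime_mul_sub_mul_of_gcd_pderiv hf₀ hfx1 hcop hgcd hco₁ hco₂).of_dvd_left
    ⟨h₁, hco₁⟩

theorem MvPolynomial.finSuccEquiv_rename_succ {R : Type*} [CommSemiring R] {n : ℕ}
    (p : MvPolynomial (Fin n) R) : finSuccEquiv R n (rename Fin.succ p) = Polynomial.C p := by
  have : (finSuccEquiv R n).toAlgHom.comp (rename Fin.succ) = Polynomial.CAlgHom :=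
    algHom_ext fun i ↦ by simp [finSuccEquiv_X_succ]
  exact DFunLike.congr_fun this p

noncomputable def MvPolynomial.finSuccEvalZero {R : Type*} [CommSemiring R] {n : ℕ} :
    MvPolynomial (Fin (n + 1)) R →+* MvPolynomial (Fin n) R :=
  (Polynomial.evalRingHom 0).comp (finSuccEquiv R n).toRingHom

theorem MvPolynomial.finSuccEvalZero_X_zero {R : Type*} [CommSemiring R] {n : ℕ} :
    finSuccEvalZero (X 0 : MvPolynomial (Fin (n + 1)) R) = 0 := by
  simp [finSuccEvalZero, finSuccEquiv_X_zero]

theorem MvPolynomial.finSuccEvalZero_rename_succ {R : Type*} [CommSemiring R] {n : ℕ}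
    (p : MvPolynomial (Fin n) R) : finSuccEvalZero (rename Fin.succ p) = p := by
  simp [finSuccEvalZero, finSuccEquiv_rename_succ]

theorem MvPolynomial.X_zero_dvd_iff {R : Type*} [CommSemiring R] {n : ℕ}
    (P : MvPolynomial (Fin (n + 1)) R) : X 0 ∣ P ↔ finSuccEvalZero P = 0 := by
  rw [← map_dvd_iff (finSuccEquiv R n), finSuccEquiv_X_zero, Polynomial.X_dvd_iff,
    Polynomial.coeff_zero_eq_eval_zero]
  rfl

theorem statement11_general (f g₁ g₂ : MvPolynomial (Fin 2) ℂ)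
    (hfnc : ∀ c : ℂ, f ≠ C c)
    -- `f` has no nonconstant factor in `ℂ[x₁]`
    (hfx1 : ∀ w : Polynomial ℂ, Polynomial.aeval (X (0 : Fin 2)) w ∣ f → w.natDegree = 0)
    -- `f` and `g₁` are coprime
    (hcop : ∀ u : MvPolynomial (Fin 2) ℂ, u ∣ f → u ∣ g₁ → IsUnit u)
    (h h₁ h₂ : MvPolynomial (Fin 2) ℂ)
    -- `h` is a gcd of `f` and `f' = ∂f/∂x₂`, with cofactors `h₁`, `h₂`
    (hgcd : ∀ u : MvPolynomial (Fin 2) ℂ, u ∣ f → u ∣ pderiv (1 : Fin 2) f → u ∣ h)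
    (hco₁ : f = h * h₁) (hco₂ : pderiv (1 : Fin 2) f = h * h₂)
    (F₁ F₂ : MvPolynomial (Fin 3) ℂ)
    (hF₁ : F₁ = (1 - X (0 : Fin 3)) * incl f + X (0 : Fin 3) * incl g₁)
    (hF₂ : F₂ = (1 - X (0 : Fin 3)) * incl (pderiv (1 : Fin 2) f) + X (0 : Fin 3) * incl g₂)
    (I J : Ideal (MvPolynomial (Fin 3) ℂ))
    (hI : I = Ideal.span {F₁, F₂})
    (hJ : J = I ⊔ Ideal.span {incl (h₂ * g₁ - h₁ * g₂)}) :
    ∀ p : MvPolynomial (Fin 3) ℂ,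
      ((X (0 : Fin 3) * p ∈ I) ↔ p ∈ J) ∧
      ((∃ k : ℕ, 1 ≤ k ∧ (X (0 : Fin 3)) ^ k * p ∈ I) ↔ p ∈ J) := by
  set t : MvPolynomial (Fin 3) ℂ := X 0
  set Δ := h₂ * g₁ - h₁ * g₂
  obtain ⟨syz₁, syz₂⟩ : incl g₂ * F₁ - incl g₁ * F₂ + (1 - t) * incl h * incl Δ = 0 ∧
      incl h₂ * F₁ - incl h₁ * F₂ - t * incl Δ = 0 := by
    rw [hF₁, hF₂, hco₂, hco₁]
    simp only [Δ, map_mul, map_sub]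
    constructor <;> ring
  have ev_incl (p : MvPolynomial (Fin 2) ℂ) : finSuccEvalZero (incl p) = p :=
    finSuccEvalZero_rename_succ p
  have ev_t : finSuccEvalZero t = 0 := finSuccEvalZero_X_zero
  have hreg : ∀ q, t * q ∈ J → q ∈ J := by
    rw [show J = Ideal.span {F₁, F₂, incl Δ} by simp only [hJ, hI, Ideal.span_insert, sup_assoc]]
    refine fun q ↦ mem_of_mul_mem_span_triple finSuccEvalZero
      (IsRegular.of_ne_zero (X_ne_zero _)).left X_zero_dvd_iff fun a₁ a₂ a₃ ha ↦ ?_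
    simp only [hF₁, hF₂, map_add, map_mul, map_sub, map_one, ev_incl, ev_t, sub_zero, one_mul,
      zero_mul, add_zero] at ha
    obtain ⟨s, r, rfl, rfl, rfl⟩ :=
      exists_eq_of_syzygy_of_gcd_pderiv hfnc hfx1 hcop hgcd hco₁ hco₂ ha
    exact ⟨incl r * incl g₂ + incl s * incl h₂, -(incl r * incl g₁ + incl s * incl h₁),
      incl r * ((1 - t) * incl h) - incl s * t,
      by linear_combination incl r * syz₁ + incl s * syz₂,
      by simp [ev_incl], by simp [ev_incl], by simp [ev_incl, ev_t]⟩
  have htJ : ∀ p ∈ J, t * p ∈ I := fun p hp ↦ mul_mem_of_mem_sup_span_singleton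
    (hI ▸ Ideal.mem_span_pair.mpr ⟨incl h₂, -incl h₁, by linear_combination syz₂⟩) (hJ ▸ hp)
  exact mul_mem_iff_and_exists_pow_mul_mem_iff (hJ ▸ le_sup_left) htJ hreg

theorem statement11 (f g₁ g₂ : MvPolynomial (Fin 2) ℂ)
    (hfnc : ∀ c : ℂ, f ≠ C c)
    -- `f` has no nonconstant factor in `ℂ[x₁]`
    (hfx1 : ∀ w : Polynomial ℂ, Polynomial.aeval (X (0 : Fin 2)) w ∣ f → w.natDegree = 0)
    -- `f` and `g₁` are coprime
    (hcop : ∀ u : MvPolynomial (Fin 2) ℂ, u ∣ f → u ∣ g₁ → IsUnit u)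
    (h h₁ h₂ : MvPolynomial (Fin 2) ℂ)
    -- `h` is a gcd of `f` and `f' = ∂f/∂x₂`, with cofactors `h₁`, `h₂`
    (hdvd₁ : h ∣ f) (hdvd₂ : h ∣ pderiv (1 : Fin 2) f)
    (hgcd : ∀ u : MvPolynomial (Fin 2) ℂ, u ∣ f → u ∣ pderiv (1 : Fin 2) f → u ∣ h)
    (hco₁ : f = h * h₁) (hco₂ : pderiv (1 : Fin 2) f = h * h₂)
    (F₁ F₂ : MvPolynomial (Fin 3) ℂ)
    (hF₁ : F₁ = (1 - X (0 : Fin 3)) * incl f + X (0 : Fin 3) * incl g₁)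
    (hF₂ : F₂ = (1 - X (0 : Fin 3)) * incl (pderiv (1 : Fin 2) f) + X (0 : Fin 3) * incl g₂)
    (I J : Ideal (MvPolynomial (Fin 3) ℂ))
    (hI : I = Ideal.span {F₁, F₂})
    (hJ : J = I ⊔ Ideal.span {incl (h₂ * g₁ - h₁ * g₂)}) :
    ∀ p : MvPolynomial (Fin 3) ℂ,
      ((X (0 : Fin 3) * p ∈ I) ↔ p ∈ J) ∧
      ((∃ k : ℕ, 1 ≤ k ∧ (X (0 : Fin 3)) ^ k * p ∈ I) ↔ p ∈ J) :=
  statement11_general f g₁ g₂ hfnc hfx1 hcop h h₁ h₂ hgcd hco₁ hco₂ F₁ F₂ hF₁ hF₂ I J hI hJ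
end
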